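/- arXiv:2309.14005 — 2 statements merged into one kernel-verified Lean document; each statement's English description precedes it below -/
import Mathlib

section
/- Composition of generalized Laplace and generalized Fourier sine transforms: L_{α,μ}{ F_{s,δ,μ}{f(t); x}; y } = (1/μ) Γ(α/μ) ∫₀^∞ t^{δ-1} (y^{2μ} + t^{2μ})^{-α/(2μ)} sin[(α/μ) arctan(t^μ/y^μ)] f(t) dt, i.e., ∫₀^∞ x^{α-1} e^{-y^μ x^μ} (∫₀^∞ t^{δ-1} sin(x^μ t^μ) f(t) dt) dx equals the right-hand side. -/
/-!
By Fubini the left side is `∫ t^(δ-1) f(t) I(t) dt`, where `I(t)` is the `x`-integral of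
`x^(α-1) e^{-y^μ x^μ} sin(t^μ x^μ)`. The substitution `u = x^μ` turns `I(t)` into `1/μ` times the
Laplace transform at `b = y^μ` of `u^(α/μ-1) sin(c u)`, `c = t^μ`. This is the imaginary part of
`∫ u^(s-1) e^{-z u} du = Γ(s) z^(-s)` at `z = b - i c`; that identity holds for real `z > 0` by
scaling the Gamma integral, hence on the whole half-plane `0 < re z` by analytic continuation.
-/

open MeasureTheory Set Filter Topology
open scoped Real Complex

lemma norm_cpow_mul_cexp_neg_mul (a z : ℂ) {t : ℝ} (ht : 0 < t) :
    ‖(t : ℂ) ^ (a - 1) * cexp (-(z * t))‖ = t ^ (a.re - 1) * rexp (-(z.re * t)) := by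
  simp [Complex.norm_cpow_eq_rpow_re_of_pos ht, Complex.norm_exp]

lemma integrableOn_cpow_mul_cexp_neg_mul {a z : ℂ} (ha : 0 < a.re) (hz : 0 < z.re) :
    IntegrableOn (fun t : ℝ => (t : ℂ) ^ (a - 1) * cexp (-(z * t))) (Ioi 0) := by
  have hreal : IntegrableOn (fun t : ℝ => t ^ (a.re - 1) * rexp (-(z.re * t))) (Ioi 0) := by
    simpa using integrableOn_rpow_mul_exp_neg_mul_rpow (p := 1) (by linarith) one_pos hz
  refine hreal.mono' ?_ ?_
  · refine ContinuousOn.aestronglyMeasurable (fun t ht => ContinuousAt.continuousWithinAt ?_)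
      measurableSet_Ioi
    have : (t : ℂ) ∈ Complex.slitPlane := Complex.ofReal_mem_slitPlane.2 ht
    fun_prop (disch := assumption)
  · filter_upwards [ae_restrict_mem measurableSet_Ioi] with t ht
    rw [norm_cpow_mul_cexp_neg_mul a z ht]

lemma differentiableOn_integral_cpow_mul_cexp_neg_mul {a : ℂ} (ha : 0 < a.re) :
    DifferentiableOn ℂ (fun z : ℂ => ∫ t in Ioi (0:ℝ), (t : ℂ) ^ (a - 1) * cexp (-(z * t)))
      {z | 0 < z.re} := by
  intro z₀ hz₀
  have hε : 0 < z₀.re / 2 := half_pos hz₀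
  have hnhds : {z : ℂ | z₀.re / 2 < z.re} ∈ 𝓝 z₀ :=
    (isOpen_lt continuous_const Complex.continuous_re).mem_nhds (half_lt_self (α := ℝ) hz₀)
  have hbound : IntegrableOn (fun t : ℝ => t ^ a.re * rexp (-(z₀.re / 2 * t))) (Ioi 0) := by
    simpa using integrableOn_rpow_mul_exp_neg_mul_rpow (p := 1) (by linarith) one_pos hε
  refine (hasDerivAt_integral_of_dominated_loc_of_deriv_le (μ := volume.restrict (Ioi 0))
    (F := fun z (t : ℝ) => (t : ℂ) ^ (a - 1) * cexp (-(z * t)))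
    (F' := fun z (t : ℝ) => (t : ℂ) ^ (a - 1) * cexp (-(z * t)) * -(t : ℂ))
    hnhds ?_ (integrableOn_cpow_mul_cexp_neg_mul ha hz₀) ?_ ?_ hbound ?_).2.differentiableAt
    |>.differentiableWithinAt
  · filter_upwards [hnhds] with z hz
    exact (integrableOn_cpow_mul_cexp_neg_mul ha (hε.trans hz)).aestronglyMeasurable
  · exact (integrableOn_cpow_mul_cexp_neg_mul ha hz₀).aestronglyMeasurable.mul
      (by fun_prop : Continuous fun t : ℝ => -(t : ℂ)).aestronglyMeasurable
  · filter_upwards [ae_restrict_mem measurableSet_Ioi] with t (ht : 0 < t) z (hz : _ < z.re)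
    rw [norm_mul, norm_cpow_mul_cexp_neg_mul a z ht, norm_neg, Complex.norm_real,
      Real.norm_of_nonneg ht.le, mul_right_comm, ← Real.rpow_add_one ht.ne', sub_add_cancel]
    gcongr
  · refine ae_of_all _ fun t z _ => ?_
    simpa [mul_assoc] using
      (((hasDerivAt_id z).mul_const (t : ℂ)).neg.cexp).const_mul ((t : ℂ) ^ (a - 1))

lemma integral_cpow_mul_cexp_neg_mul_Ioi {a z : ℂ} (ha : 0 < a.re) (hz : 0 < z.re) :
    ∫ t in Ioi (0:ℝ), (t : ℂ) ^ (a - 1) * cexp (-(z * t)) = Complex.Gamma a * z ^ (-a) := by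
  have hopen : IsOpen {z : ℂ | 0 < z.re} := isOpen_lt continuous_const Complex.continuous_re
  have hF := (differentiableOn_integral_cpow_mul_cexp_neg_mul ha).analyticOnNhd hopen
  have hG : AnalyticOnNhd ℂ (fun z : ℂ => Complex.Gamma a * z ^ (-a)) {z | 0 < z.re} :=
    DifferentiableOn.analyticOnNhd (fun z hz => ((differentiableAt_id.cpow_const
      (Or.inl hz)).const_mul _).differentiableWithinAt) hopen
  have hreal : ∀ r : ℝ, 0 < r →
      ∫ t in Ioi (0:ℝ), (t : ℂ) ^ (a - 1) * cexp (-(r * t)) = Complex.Gamma a * r ^ (-a) := by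
    intro r hr
    rw [Complex.integral_cpow_mul_exp_neg_mul_Ioi ha hr, one_div, Complex.inv_cpow _ _
      (by rw [Complex.arg_ofReal_of_nonneg hr.le]; exact Real.pi_ne_zero.symm),
      ← Complex.cpow_neg, mul_comm]
  have hfreq : ∃ᶠ w in 𝓝[≠] (1 : ℂ),
      ∫ t in Ioi (0:ℝ), (t : ℂ) ^ (a - 1) * cexp (-(w * t)) = Complex.Gamma a * w ^ (-a) := by
    have hmap : Tendsto ((↑) : ℝ → ℂ) (𝓝[≠] 1) (𝓝[≠] 1) :=
      Complex.continuous_ofReal.continuousWithinAt.tendsto_nhdsWithin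
        (fun r hr => by simpa using hr)
    refine hmap.frequently (Eventually.frequently ?_)
    filter_upwards [nhdsWithin_le_nhds (lt_mem_nhds one_pos)] with r hr using hreal r hr
  exact hF.eqOn_of_preconnected_of_frequently_eq hG (convex_halfSpace_re_gt 0).isPreconnected
    (by simp) hfreq hz

lemma Complex.arg_eq_arctan_of_re_pos {z : ℂ} (hz : 0 < z.re) :
    Complex.arg z = Real.arctan (z.im / z.re) := by
  have hbound := abs_lt.mp (Complex.abs_arg_lt_pi_div_two_iff.mpr (Or.inl hz))
  rw [← Complex.tan_arg, Real.arctan_tan hbound.1 hbound.2]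

lemma integral_rpow_mul_exp_neg_mul_mul_sin_Ioi {s b : ℝ} (hs : 0 < s) (hb : 0 < b) (c : ℝ) :
    ∫ u in Ioi (0:ℝ), u ^ (s - 1) * rexp (-(b * u)) * Real.sin (c * u)
      = Real.Gamma s * (b ^ 2 + c ^ 2) ^ (-(s / 2)) * Real.sin (s * Real.arctan (c / b)) := by
  set z : ℂ := b - c * Complex.I
  have hz : 0 < z.re := by simpa [z] using hb
  have him := (Complex.imCLM.integral_comp_comm
    (integrableOn_cpow_mul_cexp_neg_mul (a := s) (by simpa) hz)).trans
    (congrArg Complex.im (integral_cpow_mul_cexp_neg_mul_Ioi (by simpa) hz))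
  simp only [Complex.imCLM_apply] at him
  have hintegrand : ∀ u ∈ Ioi (0:ℝ), ((u : ℂ) ^ ((s : ℂ) - 1) * cexp (-(z * u))).im
      = u ^ (s - 1) * rexp (-(b * u)) * Real.sin (c * u) := by
    intro u (hu : 0 < u)
    have hre : (-(z * u)).re = -(b * u) := by simp [z]
    have him : (-(z * u)).im = c * u := by simp [z]
    rw [← Complex.ofReal_one, ← Complex.ofReal_sub, ← Complex.ofReal_cpow hu.le,
      Complex.im_ofReal_mul, Complex.exp_im, hre, him, mul_assoc]
  have hnorm : ‖z‖ = √(b ^ 2 + c ^ 2) := by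
    simpa [z, sub_eq_add_neg] using Complex.norm_add_mul_I b (-c)
  have harg : Complex.arg z = -Real.arctan (c / b) := by
    rw [Complex.arg_eq_arctan_of_re_pos hz]
    simp [z, neg_div, Real.arctan_neg]
  rw [← setIntegral_congr_fun measurableSet_Ioi hintegrand, him, ← Complex.ofReal_neg,
    Complex.Gamma_ofReal, Complex.im_ofReal_mul, Complex.cpow_ofReal_im, hnorm, harg,
    Real.sqrt_eq_rpow, ← Real.rpow_mul (by positivity)]
  ring_nf

lemma integral_rpow_smul_comp_rpow_Ioi {E : Type*} [NormedAddCommGroup E] [NormedSpace ℝ E]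
    (g : ℝ → E) (α : ℝ) {μ : ℝ} (hμ : 0 < μ) :
    ∫ x in Ioi (0:ℝ), x ^ (α - 1) • g (x ^ μ) = μ⁻¹ • ∫ u in Ioi (0:ℝ), u ^ (α / μ - 1) • g u := by
  rw [← integral_comp_rpow_Ioi_of_pos (g := fun u => u ^ (α / μ - 1) • g u) hμ, ← integral_smul]
  refine setIntegral_congr_fun measurableSet_Ioi fun x (hx : 0 < x) => ?_
  rw [smul_smul, smul_smul, ← Real.rpow_mul hx.le, ← mul_assoc, inv_mul_cancel₀ hμ.ne', one_mul,
    ← Real.rpow_add hx]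
  congr 2
  field_simp
  ring

lemma integral_rpow_mul_exp_neg_mul_rpow_mul_sin_Ioi {α μ b : ℝ} (hα : 0 < α) (hμ : 0 < μ)
    (hb : 0 < b) (c : ℝ) :
    ∫ x in Ioi (0:ℝ), x ^ (α - 1) * rexp (-(b * x ^ μ)) * Real.sin (c * x ^ μ)
      = 1 / μ * Real.Gamma (α / μ) * (b ^ 2 + c ^ 2) ^ (-(α / (2 * μ)))
          * Real.sin (α / μ * Real.arctan (c / b)) := by
  have := integral_rpow_smul_comp_rpow_Ioi (fun u => rexp (-(b * u)) * Real.sin (c * u)) α hμ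
  simp only [smul_eq_mul, ← mul_assoc] at this
  rw [this, integral_rpow_mul_exp_neg_mul_mul_sin_Ioi (div_pos hα hμ) hb, div_div, mul_comm 2 μ]
  ring

theorem laplace_fourier_sine_composition_general (α δ μ y : ℝ) (f : ℝ → ℝ)
    (hμ : 0 < μ) (hα : μ < α) (hy : 0 < y)
    (hint : IntegrableOn
      (fun p : ℝ × ℝ =>
        p.1 ^ (α - 1) * Real.exp (-(y ^ μ * p.1 ^ μ)) *
          (p.2 ^ (δ - 1) * Real.sin (p.1 ^ μ * p.2 ^ μ) * f p.2))
      (Ioi 0 ×ˢ Ioi 0)) :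
    ∫ x in Ioi (0:ℝ), x ^ (α - 1) * Real.exp (-(y ^ μ * x ^ μ)) *
        ∫ t in Ioi (0:ℝ), t ^ (δ - 1) * Real.sin (x ^ μ * t ^ μ) * f t
      = (1 / μ) * Real.Gamma (α / μ) *
        ∫ t in Ioi (0:ℝ), t ^ (δ - 1) * (y ^ (2 * μ) + t ^ (2 * μ)) ^ (-(α / (2 * μ))) *
          Real.sin ((α / μ) * Real.arctan (t ^ μ / y ^ μ)) * f t := by
  have hpow_two : ∀ {r : ℝ}, 0 ≤ r → (r ^ μ) ^ 2 = r ^ (2 * μ) := fun hr => by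
    rw [mul_comm, Real.rpow_mul hr, Real.rpow_two]
  have hinner : ∀ t ∈ Ioi (0:ℝ), ∫ x in Ioi (0:ℝ), x ^ (α - 1) * rexp (-(y ^ μ * x ^ μ)) *
        (t ^ (δ - 1) * Real.sin (x ^ μ * t ^ μ) * f t)
      = 1 / μ * Real.Gamma (α / μ) * (t ^ (δ - 1) * (y ^ (2 * μ) + t ^ (2 * μ)) ^ (-(α / (2 * μ)))
          * Real.sin (α / μ * Real.arctan (t ^ μ / y ^ μ)) * f t) := by
    intro t (ht : 0 < t)
    calc _ = t ^ (δ - 1) * f t * ∫ x in Ioi (0:ℝ),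
            x ^ (α - 1) * rexp (-(y ^ μ * x ^ μ)) * Real.sin (t ^ μ * x ^ μ) := by
          rw [← integral_const_mul]
          exact integral_congr_ae (ae_of_all _ fun x => by simp only [mul_comm (x ^ μ)]; ring)
      _ = _ := by
          rw [integral_rpow_mul_exp_neg_mul_rpow_mul_sin_Ioi (hμ.trans hα) hμ (by positivity),
            hpow_two hy.le, hpow_two ht.le]
          ring
  calc _ = ∫ x in Ioi (0:ℝ), ∫ t in Ioi (0:ℝ), x ^ (α - 1) * rexp (-(y ^ μ * x ^ μ)) *
          (t ^ (δ - 1) * Real.sin (x ^ μ * t ^ μ) * f t) := by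
        simp_rw [integral_const_mul]
    _ = ∫ t in Ioi (0:ℝ), ∫ x in Ioi (0:ℝ), x ^ (α - 1) * rexp (-(y ^ μ * x ^ μ)) *
          (t ^ (δ - 1) * Real.sin (x ^ μ * t ^ μ) * f t) :=
        integral_integral_swap (by rwa [Measure.prod_restrict, ← Measure.volume_eq_prod])
    _ = _ := by rw [setIntegral_congr_fun measurableSet_Ioi hinner, integral_const_mul]

theorem laplace_fourier_sine_composition (α δ μ y : ℝ) (f : ℝ → ℝ)
    (hμ : 0 < μ) (hα : μ < α) (hy : 0 < y) (hf : Measurable f)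
    (habs : IntegrableOn (fun t => t ^ (δ - 1) * f t) (Ioi 0))
    (hint : IntegrableOn
      (fun p : ℝ × ℝ =>
        p.1 ^ (α - 1) * Real.exp (-(y ^ μ * p.1 ^ μ)) *
          (p.2 ^ (δ - 1) * Real.sin (p.1 ^ μ * p.2 ^ μ) * f p.2))
      (Ioi 0 ×ˢ Ioi 0)) :
    ∫ x in Ioi (0:ℝ), x ^ (α - 1) * Real.exp (-(y ^ μ * x ^ μ)) *
        ∫ t in Ioi (0:ℝ), t ^ (δ - 1) * Real.sin (x ^ μ * t ^ μ) * f t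
      = (1 / μ) * Real.Gamma (α / μ) *
        ∫ t in Ioi (0:ℝ), t ^ (δ - 1) * (y ^ (2 * μ) + t ^ (2 * μ)) ^ (-(α / (2 * μ))) *
          Real.sin ((α / μ) * Real.arctan (t ^ μ / y ^ μ)) * f t :=
  laplace_fourier_sine_composition_general α δ μ y f hμ hα hy hint
end

section
/- The generalized Stieltjes transform of a stretched exponential is a Tricomi U function: S_{δ,μ,α/μ}{e^{-a^μ t^μ}; y} = ∫₀^∞ t^{δ-1}(y^μ + t^μ)^{-α/μ} e^{-a^μ t^μ} dt = (a^{α-δ}/μ) Γ(δ/μ) U(α/μ; 1 + α/μ − δ/μ; a^μ y^μ), where U(a;c;z) = (1/Γ(a)) ∫₀^∞ e^{-zu} u^{a-1}(1+u)^{c-a-1} du. -/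
open MeasureTheory Set

noncomputable def tricomiU (a c z : ℝ) : ℝ :=
  (1 / Real.Gamma a) * ∫ u in Set.Ioi (0:ℝ), Real.exp (-(z * u)) * u ^ (a - 1) * (1 + u) ^ (c - a - 1)

/-!
The substitution `s = t ^ μ` followed by `s = y ^ μ * u` turns the transform into
`(1/μ) y^(δ-α) ∫₀^∞ e^(-z u) u^(p-1) (1+u)^(-q) du = (1/μ) y^(δ-α) Γ(p) U(p; 1+p-q; z)` with
`p = δ/μ`, `q = α/μ`, `z = a^μ y^μ`. Kummer's transformation `U(p; 1+p-q; z) = z^(q-p) U(q; 1+q-p; z)`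
then gives the claim. Kummer's transformation itself comes from Fubini applied to the kernel
`e^(-z(u+v+uv)) u^(p-1) v^(q-1)`, which is symmetric under `(p,u) ↔ (q,v)`: integrating out `v`
with the Gamma integral leaves `Γ(q) z^(-q)` times the integrand of `Γ(p) U(p; 1+p-q; z)`.
-/

open Real

lemma integral_rpow_mul_comp_rpow_Ioi {E : Type*} [NormedAddCommGroup E] [NormedSpace ℝ E]
    {δ μ : ℝ} (hμ : 0 < μ) (g : ℝ → E) :
    ∫ t in Ioi (0:ℝ), t ^ (δ - 1) • g (t ^ μ) =
      (1 / μ) • ∫ s in Ioi (0:ℝ), s ^ (δ / μ - 1) • g s := by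
  rw [← integral_comp_rpow_Ioi_of_pos hμ (g := fun s => s ^ (δ / μ - 1) • g s), ← integral_smul]
  refine setIntegral_congr_fun measurableSet_Ioi fun t (ht : 0 < t) => ?_
  have hpow : t ^ (μ - 1) * (t ^ μ) ^ (δ / μ - 1) = t ^ (δ - 1) := by
    rw [← rpow_mul ht.le, ← rpow_add ht]
    congr 1
    field_simp
    ring
  simp only [smul_smul]
  rw [← hpow]
  congr 1
  field_simp

lemma integral_rpow_mul_add_rpow_mul_exp_Ioi {p q b c : ℝ} (hc : 0 < c) :
    ∫ s in Ioi (0:ℝ), s ^ (p - 1) * ((c + s) ^ (-q) * exp (-(b * s)))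
      = c ^ (p - q) * ∫ u in Ioi (0:ℝ), exp (-(b * c * u)) * u ^ (p - 1) * (1 + u) ^ (-q) := by
  have hsub := integral_comp_mul_left_Ioi
    (fun s : ℝ => s ^ (p - 1) * ((c + s) ^ (-q) * exp (-(b * s)))) 0 hc
  rw [mul_zero, smul_eq_mul, eq_inv_mul_iff_mul_eq₀ hc.ne'] at hsub
  rw [← hsub, ← integral_const_mul, ← integral_const_mul]
  refine setIntegral_congr_fun measurableSet_Ioi fun u (hu : 0 < u) => ?_
  have hc_pow : c * (c ^ (p - 1) * c ^ (-q)) = c ^ (p - q) := by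
    calc c * (c ^ (p - 1) * c ^ (-q)) = c ^ (1 + (p - 1 + -q)) := by
          rw [rpow_add hc, rpow_add hc, rpow_one]
      _ = c ^ (p - q) := by ring_nf
  rw [show c + c * u = c * (1 + u) by ring, mul_rpow hc.le hu.le, mul_rpow hc.le (by positivity),
    ← hc_pow, mul_assoc b]
  ring

lemma integrableOn_rpow_mul_exp_neg_mul {a r : ℝ} (ha : 0 < a) (hr : 0 < r) :
    IntegrableOn (fun t : ℝ => t ^ (a - 1) * exp (-(r * t))) (Ioi 0) :=
  .of_integral_ne_zero (by rw [integral_rpow_mul_exp_neg_mul_Ioi ha hr]; positivity)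

lemma integrableOn_exp_neg_mul_mul_rpow_mul_one_add_rpow {a b z : ℝ} (ha : 0 < a) (hb : 0 ≤ b)
    (hz : 0 < z) :
    IntegrableOn (fun u : ℝ => exp (-(z * u)) * u ^ (a - 1) * (1 + u) ^ (-b)) (Ioi 0) := by
  refine (integrableOn_rpow_mul_exp_neg_mul ha hz).mono' (by fun_prop) ?_
  filter_upwards [ae_restrict_mem measurableSet_Ioi] with u (hu : 0 < u)
  have h1 : (1 + u) ^ (-b) ≤ 1 := rpow_le_one_of_one_le_of_nonpos (by linarith) (by linarith)
  rw [norm_of_nonneg (by positivity), mul_comm (exp _)]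
  calc u ^ (a - 1) * exp (-(z * u)) * (1 + u) ^ (-b)
      ≤ u ^ (a - 1) * exp (-(z * u)) * 1 := by gcongr
    _ = u ^ (a - 1) * exp (-(z * u)) := mul_one _

noncomputable def kummerKernel (z p q u v : ℝ) : ℝ :=
  exp (-(z * (u + v + u * v))) * u ^ (p - 1) * v ^ (q - 1)

lemma kummerKernel_comm (z p q u v : ℝ) : kummerKernel z p q u v = kummerKernel z q p v u := by
  unfold kummerKernel
  ring_nf

lemma kummerKernel_eq (z p q u v : ℝ) :
    kummerKernel z p q u v
      = exp (-(z * u)) * u ^ (p - 1) * (v ^ (q - 1) * exp (-(z * (1 + u) * v))) := by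
  unfold kummerKernel
  rw [show -(z * (u + v + u * v)) = -(z * u) + -(z * (1 + u) * v) by ring, exp_add]
  ring

lemma integral_kummerKernel_right {z p q u : ℝ} (hz : 0 < z) (hq : 0 < q) (hu : 0 < u) :
    ∫ v in Ioi (0:ℝ), kummerKernel z p q u v
      = Gamma q * z ^ (-q) * (exp (-(z * u)) * u ^ (p - 1) * (1 + u) ^ (-q)) := by
  simp_rw [kummerKernel_eq]
  rw [integral_const_mul, integral_rpow_mul_exp_neg_mul_Ioi hq (by positivity), one_div,
    inv_rpow (by positivity), ← rpow_neg (by positivity), mul_rpow hz.le (by positivity)]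
  ring

lemma integrable_kummerKernel {z p q : ℝ} (hz : 0 < z) (hp : 0 < p) (hq : 0 < q) :
    Integrable (Function.uncurry (kummerKernel z p q))
      ((volume.restrict (Ioi 0)).prod (volume.restrict (Ioi 0))) := by
  rw [integrable_prod_iff (by unfold Function.uncurry kummerKernel; fun_prop)]
  constructor
  · filter_upwards [ae_restrict_mem measurableSet_Ioi] with u (hu : 0 < u)
    simp_rw [Function.uncurry_apply_pair, kummerKernel_eq]
    exact (integrableOn_rpow_mul_exp_neg_mul hq (by positivity)).const_mul _
  · refine IntegrableOn.congr_fun ((integrableOn_exp_neg_mul_mul_rpow_mul_one_add_rpow hp hq.le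
      hz).const_mul (Gamma q * z ^ (-q))) (fun u (hu : 0 < u) => ?_) measurableSet_Ioi
    have hnorm : ∀ᵐ v ∂(volume.restrict (Ioi 0)),
        ‖kummerKernel z p q u v‖ = kummerKernel z p q u v := by
      filter_upwards [ae_restrict_mem measurableSet_Ioi] with v (hv : 0 < v)
      exact norm_of_nonneg (by unfold kummerKernel; positivity)
    simp only [Function.uncurry_apply_pair]
    rw [integral_congr_ae hnorm, integral_kummerKernel_right hz hq hu]

lemma Gamma_mul_integral_tricomiU_symm {z p q : ℝ} (hz : 0 < z) (hp : 0 < p) (hq : 0 < q) :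
    Gamma q * z ^ (-q) * ∫ u in Ioi (0:ℝ), exp (-(z * u)) * u ^ (p - 1) * (1 + u) ^ (-q)
      = Gamma p * z ^ (-p) *
          ∫ u in Ioi (0:ℝ), exp (-(z * u)) * u ^ (q - 1) * (1 + u) ^ (-p) := by
  have hswap := integral_integral_swap (integrable_kummerKernel hz hp hq)
  simp_rw [← integral_const_mul]
  rw [setIntegral_congr_fun measurableSet_Ioi fun u (hu : 0 < u) =>
      (integral_kummerKernel_right hz hq hu).symm,
    setIntegral_congr_fun measurableSet_Ioi fun u (hu : 0 < u) =>
      (integral_kummerKernel_right hz hp hu).symm, hswap]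
  simp_rw [kummerKernel_comm z p q]

lemma Gamma_mul_tricomiU {a b z : ℝ} (ha : 0 < a) :
    Gamma a * tricomiU a (1 + a - b) z
      = ∫ u in Ioi (0:ℝ), exp (-(z * u)) * u ^ (a - 1) * (1 + u) ^ (-b) := by
  rw [tricomiU, ← mul_assoc, mul_one_div_cancel (Gamma_pos_of_pos ha).ne', one_mul,
    show 1 + a - b - a - 1 = -b by ring]

theorem tricomiU_kummer {a b z : ℝ} (ha : 0 < a) (hb : 0 < b) (hz : 0 < z) :
    tricomiU a (1 + a - b) z = z ^ (b - a) * tricomiU b (1 + b - a) z := by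
  have hsymm := Gamma_mul_integral_tricomiU_symm hz ha hb
  rw [← Gamma_mul_tricomiU ha, ← Gamma_mul_tricomiU hb, rpow_neg hz.le, rpow_neg hz.le] at hsymm
  have hGa := (Gamma_pos_of_pos ha).ne'
  have hGb := (Gamma_pos_of_pos hb).ne'
  rw [rpow_sub hz]
  field_simp at hsymm ⊢
  linear_combination hsymm

theorem gen_stieltjes_of_exp_general (α δ μ a y : ℝ) (hμ : 0 < μ) (ha : 0 < a) (hy : 0 < y)
    (hδ : 0 < δ / μ) (hα : 0 < α / μ) :
    ∫ t in Ioi (0:ℝ), t ^ (δ - 1) * (y ^ μ + t ^ μ) ^ (-(α / μ)) * Real.exp (-(a ^ μ * t ^ μ))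
      = (a ^ (α - δ) / μ) * Real.Gamma (δ / μ) *
        tricomiU (α / μ) (1 + α / μ - δ / μ) (a ^ μ * y ^ μ) := by
  have hyμ : 0 < y ^ μ := rpow_pos_of_pos hy μ
  have hz : 0 < a ^ μ * y ^ μ := mul_pos (rpow_pos_of_pos ha μ) hyμ
  have hpow : (y ^ μ) ^ (δ / μ - α / μ) * (a ^ μ * y ^ μ) ^ (α / μ - δ / μ) = a ^ (α - δ) := by
    rw [mul_rpow (rpow_pos_of_pos ha μ).le hyμ.le, mul_left_comm, ← rpow_add hyμ,
      ← rpow_mul ha.le, show δ / μ - α / μ + (α / μ - δ / μ) = 0 by ring, rpow_zero, mul_one]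
    congr 1
    field_simp
  calc ∫ t in Ioi (0:ℝ), t ^ (δ - 1) * (y ^ μ + t ^ μ) ^ (-(α / μ)) * exp (-(a ^ μ * t ^ μ))
      = (1 / μ) * ∫ s in Ioi (0:ℝ), s ^ (δ / μ - 1) *
          ((y ^ μ + s) ^ (-(α / μ)) * exp (-(a ^ μ * s))) := by
        simp only [mul_assoc]
        exact integral_rpow_mul_comp_rpow_Ioi hμ
          (fun s => (y ^ μ + s) ^ (-(α / μ)) * exp (-(a ^ μ * s)))
    _ = (1 / μ) * ((y ^ μ) ^ (δ / μ - α / μ) *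
          (Gamma (δ / μ) * tricomiU (δ / μ) (1 + δ / μ - α / μ) (a ^ μ * y ^ μ))) := by
        rw [integral_rpow_mul_add_rpow_mul_exp_Ioi hyμ, Gamma_mul_tricomiU hδ]
    _ = _ := by
        rw [tricomiU_kummer hδ hα hz, ← hpow]
        ring

theorem gen_stieltjes_of_exp (α δ μ a y : ℝ) (hμ : 0 < μ) (ha : 0 < a) (hy : 0 < y)
    (hδ : 0 < δ / μ) (hα : 0 < α / μ) (h : -1 < α / μ - δ / μ) :
    ∫ t in Ioi (0:ℝ), t ^ (δ - 1) * (y ^ μ + t ^ μ) ^ (-(α / μ)) * Real.exp (-(a ^ μ * t ^ μ))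
      = (a ^ (α - δ) / μ) * Real.Gamma (δ / μ) *
        tricomiU (α / μ) (1 + α / μ - δ / μ) (a ^ μ * y ^ μ) :=
  gen_stieltjes_of_exp_general α δ μ a y hμ ha hy hδ hα
end
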